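/- For n ≥ 2, the number of vectors v in (Z/pZ)^n (p prime, p sufficiently large) avoiding the Shi arrangement conditions (v_i - v_j ∉ {0,1} for i < j) equals the number avoiding the Ish arrangement conditions (v_i ≠ v_j for i < j and v_i - v_n ∉ {1,...,n-i} for i < n); i.e., the Shi and Ish arrangements have the same characteristic polynomial q(q-n)^{n-1}. -/

import Mathlib

/-!
Shi. Pairs `(v, e)` of a Shi point `v` and a residue `e` outside its image are counted in two
ways. There are `p - n` choices of `e` for each `v`; translating by `-e` instead gives `p` times
the number of Shi points with no zero coordinate. Lifting those to `{1, …, p - 1}` makes the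
Shi conditions linear: the labels are distinct and increase along every run of consecutive
occupied positions. Such a configuration is determined by the number of empty positions below
each label, an arbitrary map to `Fin (p - n)`. Hence `|Shi| (p - n) = p (p - n) ^ n`.

Ish. Fix `v n = t`. Choosing `v 1, v 2, …` in turn, `v i` has to avoid `t, t + 1, …, t + n - i`
and the earlier coordinates; these nested sets always leave `p - n` choices.
-/

open Finset

def AvoidsShi {ι R : Type*} [LT ι] [AddGroupWithOne R] (v : ι → R) : Prop :=
  ∀ i j, i < j → v i - v j ≠ 0 ∧ v i - v j ≠ 1

/-- With `0`-based indices the hyperplanes `e_i - e_n = a` of `Ish(m + 1)` have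
`1 ≤ a ≤ m - i`. -/
def AvoidsIsh {R : Type*} [AddGroupWithOne R] {m : ℕ} (v : Fin (m + 1) → R) : Prop :=
  (∀ i j, i < j → v i ≠ v j) ∧
    ∀ i : Fin (m + 1), ∀ a : ℕ, 1 ≤ a → a ≤ m - i → v i ≠ v (Fin.last m) + a

section Order

variable {ι α β : Type*} [LinearOrder α] [LinearOrder β]

lemma lt_iff_lt_of_lt_imp_lt {f : ι → α} {g : ι → β} (hf : Function.Injective f)
    (h : ∀ i j, f i < f j → g i < g j) (i j : ι) : g i < g j ↔ f i < f j := by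
  refine ⟨fun hg => ?_, h i j⟩
  rcases lt_trichotomy (f i) (f j) with hlt | heq | hgt
  · exact hlt
  · exact absurd hg (hf heq ▸ lt_irrefl _)
  · exact absurd hg (h j i hgt).asymm

lemma le_iff_le_of_lt_imp_lt {f : ι → α} {g : ι → β} (hf : Function.Injective f)
    (h : ∀ i j, f i < f j → g i < g j) (i j : ι) : g i ≤ g j ↔ f i ≤ f j := by
  simpa only [not_lt] using (lt_iff_lt_of_lt_imp_lt hf h j i).not

lemma card_filter_le_lt_card_filter_le [Fintype ι] {f : ι → α} {i j : ι} (h : f i < f j) :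
    #{k | f k ≤ f i} < #{k | f k ≤ f j} := by
  refine card_lt_card ⟨fun k hk => ?_, fun hsub => ?_⟩
  · simp only [mem_filter, mem_univ, true_and] at hk ⊢
    exact hk.trans h.le
  · have hj := hsub (mem_filter.2 ⟨mem_univ j, le_rfl⟩)
    simp only [mem_filter, mem_univ, true_and] at hj
    exact not_le_of_gt h hj

lemma injective_toLex_pair (g : ι → ℕ) : Function.Injective fun i => toLex (g i, i) :=
  fun _ _ h => congrArg Prod.snd (toLex.injective h)

end Order

section AvoidsShi

variable {ι : Type*} [LinearOrder ι]

lemma AvoidsShi.injective {R : Type*} [AddGroupWithOne R] {v : ι → R} (hv : AvoidsShi v) :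
    Function.Injective v := by
  intro i j h
  by_contra hij
  rcases lt_or_gt_of_ne hij with hlt | hlt
  · exact (hv i j hlt).1 (sub_eq_zero.2 h)
  · exact (hv j i hlt).1 (sub_eq_zero.2 h.symm)

lemma avoidsShi_sub_const_iff {R : Type*} [AddCommGroupWithOne R] (v : ι → R) (e : R) :
    (AvoidsShi fun i => v i - e) ↔ AvoidsShi v := by
  simp only [AvoidsShi, sub_sub_sub_cancel_right]

lemma AvoidsShi.le_of_Icc_subset_range {a : ι → ℕ} (ha : AvoidsShi fun i => (a i : ℤ))
    {i j : ι} (hij : a i ≤ a j) (hocc : Set.Icc (a i) (a j) ⊆ Set.range a) : i ≤ j := by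
  suffices ∀ x, a i ≤ x → x ≤ a j → ∀ k, a k = x → i ≤ k from this (a j) hij le_rfl j rfl
  intro x hx
  induction x, hx using Nat.le_induction with
  | base => exact fun _ k hk => (ha.injective (congrArg Nat.cast hk)).ge
  | succ x hx ih =>
    intro hxj k hk
    obtain ⟨l, hl⟩ := hocc ⟨hx, by omega⟩
    refine (ih (by omega) l hl).trans (not_lt.1 fun hkl => (ha k l hkl).2 ?_)
    simp only [hk, hl]
    push_cast
    ring

end AvoidsShi

section Vacancies

variable {ι : Type*} [Fintype ι]

def vacancies (a : ι → ℕ) (i : ι) : ℕ := #(Icc 1 (a i) \ univ.image a)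

lemma vacancies_add_card_le {a : ι → ℕ} (ha : Function.Injective a) (hpos : ∀ i, 0 < a i)
    (i : ι) : vacancies a i + #{j | a j ≤ a i} = a i := by
  have hinter : Icc 1 (a i) ∩ univ.image a = ({j | a j ≤ a i} : Finset ι).image a := by
    ext x
    simp only [mem_inter, mem_Icc, mem_image, mem_filter, mem_univ, true_and]
    constructor
    · rintro ⟨⟨-, hx⟩, j, rfl⟩
      exact ⟨j, hx, rfl⟩
    · rintro ⟨j, hj, rfl⟩
      exact ⟨⟨hpos j, hj⟩, j, rfl⟩
  rw [vacancies, ← card_image_of_injective _ ha, ← hinter, card_sdiff_add_card_inter,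
    Nat.card_Icc, Nat.add_sub_cancel]

lemma vacancies_mono {a : ι → ℕ} {i j : ι} (h : a i ≤ a j) : vacancies a i ≤ vacancies a j :=
  card_le_card (sdiff_subset_sdiff (Icc_subset_Icc le_rfl h) subset_rfl)

lemma vacancies_lt {p : ℕ} {a : ι → ℕ} (ha : Function.Injective a)
    (hbound : ∀ i, 0 < a i ∧ a i < p) (i : ι) : vacancies a i < p - Fintype.card ι := by
  have hsub : univ.image a ⊆ Icc 1 (p - 1) := fun x hx => by
    obtain ⟨j, -, rfl⟩ := mem_image.1 hx
    have := hbound j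
    simp only [mem_Icc]
    omega
  have hcard := card_le_card hsub
  have hvac : vacancies a i ≤ #(Icc 1 (p - 1) \ univ.image a) :=
    card_le_card (sdiff_subset_sdiff (Icc_subset_Icc le_rfl (by have := hbound i; omega))
      subset_rfl)
  rw [card_sdiff_of_subset hsub] at hvac
  rw [card_image_of_injective _ ha, Nat.card_Icc, card_univ] at hcard hvac
  have := hbound i
  omega

variable [LinearOrder ι]

/-- Put the labels with `g i = k` right after the `k`-th empty position, in increasing order. -/
def placement (g : ι → ℕ) (i : ι) : ℕ := g i + #{j | toLex (g j, j) ≤ toLex (g i, i)}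

lemma placement_lt_placement_of_lt (g : ι → ℕ) {i j : ι}
    (h : toLex (g i, i) < toLex (g j, j)) : placement g i < placement g j := by
  have hcard := card_filter_le_lt_card_filter_le (f := fun k => toLex (g k, k)) h
  rw [Prod.Lex.toLex_lt_toLex] at h
  unfold placement
  omega

lemma placement_pos (g : ι → ℕ) (i : ι) : 0 < placement g i :=
  Nat.add_pos_right _ (card_pos.2 ⟨i, by simp⟩)

lemma placement_le (g : ι → ℕ) (i : ι) : placement g i ≤ g i + Fintype.card ι :=
  Nat.add_le_add_left ((card_filter_le _ _).trans_eq card_univ) _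

lemma avoidsShi_placement (g : ι → ℕ) : AvoidsShi fun i => (placement g i : ℤ) := by
  intro i j hij
  dsimp only
  rcases lt_or_gt_of_ne ((injective_toLex_pair g).ne hij.ne) with h | h
  · have := placement_lt_placement_of_lt g h
    omega
  · have hcard := card_filter_le_lt_card_filter_le (f := fun k => toLex (g k, k)) h
    rw [Prod.Lex.toLex_lt_toLex] at h
    have hg : g j < g i := by simpa [not_lt_of_gt hij] using h
    unfold placement
    omega

lemma vacancies_placement (g : ι → ℕ) : vacancies (placement g) = g := funext fun i => by
  have hfilter : ({j | placement g j ≤ placement g i} : Finset ι) =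
      ({j | toLex (g j, j) ≤ toLex (g i, i)} : Finset ι) :=
    filter_congr fun j _ => le_iff_le_of_lt_imp_lt (injective_toLex_pair g)
      (fun _ _ => placement_lt_placement_of_lt g) j i
  have := vacancies_add_card_le (fun j k h => (avoidsShi_placement g).injective
    (congrArg Nat.cast h)) (placement_pos g) i
  rw [hfilter, placement] at this
  omega

lemma toLex_vacancies_lt_of_lt {a : ι → ℕ} (ha : AvoidsShi fun i => (a i : ℤ)) {i j : ι}
    (h : a i < a j) : toLex (vacancies a i, i) < toLex (vacancies a j, j) := by
  simp only [Prod.Lex.toLex_lt_toLex]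
  refine (vacancies_mono h.le).lt_or_eq.imp id fun heq => ⟨heq, ?_⟩
  have hsame : Icc 1 (a i) \ univ.image a = Icc 1 (a j) \ univ.image a :=
    eq_of_subset_of_card_le (sdiff_subset_sdiff (Icc_subset_Icc le_rfl h.le) subset_rfl) heq.ge
  refine lt_of_le_of_ne (ha.le_of_Icc_subset_range h.le fun x hx => ?_) (by rintro rfl; simp at h)
  by_contra hx'
  rcases hx.1.eq_or_lt with rfl | hlt
  · exact hx' ⟨i, rfl⟩
  · have hmem : x ∈ Icc 1 (a j) \ univ.image a := by
      simp only [mem_sdiff, mem_Icc, mem_image, mem_univ, true_and]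
      exact ⟨⟨by omega, hx.2⟩, hx'⟩
    rw [← hsame, mem_sdiff, mem_Icc] at hmem
    omega

lemma placement_vacancies {a : ι → ℕ} (ha : AvoidsShi fun i => (a i : ℤ)) (hpos : ∀ i, 0 < a i) :
    placement (vacancies a) = a := funext fun i => by
  have hinj : Function.Injective a := fun j k h => ha.injective (congrArg Nat.cast h)
  have hfilter : ({j | toLex (vacancies a j, j) ≤ toLex (vacancies a i, i)} : Finset ι) =
      ({j | a j ≤ a i} : Finset ι) :=
    filter_congr fun j _ => le_iff_le_of_lt_imp_lt hinj
      (fun _ _ => toLex_vacancies_lt_of_lt ha) j i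
  rw [placement, hfilter, vacancies_add_card_le hinj hpos]

def vacancyEquiv (p : ℕ) :
    {a : ι → ℕ // (AvoidsShi fun i => (a i : ℤ)) ∧ ∀ i, 0 < a i ∧ a i < p} ≃
      (ι → Fin (p - Fintype.card ι)) where
  toFun a i := ⟨vacancies a.1 i,
    vacancies_lt (fun j k h => a.2.1.injective (congrArg Nat.cast h)) a.2.2 i⟩
  invFun g := ⟨placement fun i => g i, avoidsShi_placement _, fun i =>
    ⟨placement_pos _ i, (placement_le _ i).trans_lt (by have := (g i).isLt; omega)⟩⟩
  left_inv a := Subtype.ext (placement_vacancies a.2.1 fun i => (a.2.2 i).1)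
  right_inv g := funext fun i => Fin.ext (congrFun (vacancies_placement _) i)

end Vacancies

section Translation

variable {ι R : Type*} [LinearOrder ι] [AddCommGroupWithOne R]

def shiTranslationEquiv :
    (Σ v : {v : ι → R // AvoidsShi v}, ↥(Set.range v.1)ᶜ) ≃
      R × {w : ι → R // AvoidsShi w ∧ ∀ i, w i ≠ 0} where
  toFun x := (x.2, ⟨fun i => x.1.1 i - x.2, (avoidsShi_sub_const_iff _ _).2 x.1.2,
    fun i h => x.2.2 ⟨i, sub_eq_zero.1 h⟩⟩)
  invFun y := ⟨⟨fun i => y.2.1 i + y.1, (avoidsShi_sub_const_iff _ y.1).1 (by simpa using y.2.2.1)⟩,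
    ⟨y.1, fun ⟨i, h⟩ => y.2.2.2 i (by simpa using h)⟩⟩
  left_inv x := Sigma.subtype_ext (Subtype.ext (funext fun i => sub_add_cancel _ _)) rfl
  right_inv y := Prod.ext rfl (Subtype.ext (funext fun i => add_sub_cancel_right _ _))

lemma card_avoidsShi_mul [Fintype ι] [Fintype R] :
    Nat.card {v : ι → R // AvoidsShi v} * (Fintype.card R - Fintype.card ι) =
      Fintype.card R * Nat.card {w : ι → R // AvoidsShi w ∧ ∀ i, w i ≠ 0} := by
  classical
  have hfiber (v : {v : ι → R // AvoidsShi v}) :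
      Nat.card ↥(Set.range v.1)ᶜ = Fintype.card R - Fintype.card ι := by
    rw [Nat.card_coe_set_eq, Set.ncard_compl, ← Nat.card_coe_set_eq,
      Nat.card_range_of_injective v.2.injective, Nat.card_eq_fintype_card, Nat.card_eq_fintype_card]
  calc Nat.card {v : ι → R // AvoidsShi v} * (Fintype.card R - Fintype.card ι)
      = Nat.card (Σ v : {v : ι → R // AvoidsShi v}, ↥(Set.range v.1)ᶜ) := by
        rw [Nat.card_sigma, sum_congr rfl fun v _ => hfiber v, sum_const, card_univ, smul_eq_mul,
          Nat.card_eq_fintype_card]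
    _ = Nat.card (R × {w : ι → R // AvoidsShi w ∧ ∀ i, w i ≠ 0}) :=
        Nat.card_congr shiTranslationEquiv
    _ = _ := by rw [Nat.card_prod, Nat.card_eq_fintype_card (α := R)]

end Translation

section ShiCount

variable {ι : Type*} [LinearOrder ι] {p : ℕ}

lemma ZMod.sub_eq_one_iff_val_eq [NeZero p] {x y : ZMod p} (hx : x ≠ 0) :
    x - y = 1 ↔ x.val = y.val + 1 := by
  rw [sub_eq_iff_eq_add']
  refine ⟨fun h => ?_, fun h => by rw [← ZMod.natCast_zmod_val x, h, Nat.cast_succ,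
    ZMod.natCast_zmod_val]⟩
  have hval : x.val = (y.val + 1) % p := by
    rw [← ZMod.val_natCast, Nat.cast_succ, ZMod.natCast_zmod_val, h]
  have hy := ZMod.val_lt y
  have hx' := ZMod.val_pos.2 hx
  rcases Nat.lt_or_ge (y.val + 1) p with hlt | hge
  · rwa [Nat.mod_eq_of_lt hlt] at hval
  · rw [show y.val + 1 = p by omega, Nat.mod_self] at hval
    omega

lemma avoidsShi_iff_avoidsShi_val [NeZero p] {v : ι → ZMod p} (hv : ∀ i, v i ≠ 0) :
    AvoidsShi v ↔ AvoidsShi fun i => ((v i).val : ℤ) := by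
  refine forall₂_congr fun i j => imp_congr_right fun _ => and_congr ?_ ?_
  · rw [sub_ne_zero, sub_ne_zero, Ne, Ne, Nat.cast_inj, (ZMod.val_injective p).eq_iff]
  · dsimp only
    rw [Ne, ZMod.sub_eq_one_iff_val_eq (hv i)]
    omega

def avoidsShiValEquiv (p : ℕ) [NeZero p] :
    {v : ι → ZMod p // AvoidsShi v ∧ ∀ i, v i ≠ 0} ≃
      {a : ι → ℕ // (AvoidsShi fun i => (a i : ℤ)) ∧ ∀ i, 0 < a i ∧ a i < p} where
  toFun v := ⟨fun i => (v.1 i).val, (avoidsShi_iff_avoidsShi_val v.2.2).1 v.2.1,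
    fun i => ⟨ZMod.val_pos.2 (v.2.2 i), ZMod.val_lt _⟩⟩
  invFun a := ⟨fun i => a.1 i, by
    have hval (i : ι) : ((a.1 i : ZMod p)).val = a.1 i := ZMod.val_cast_of_lt (a.2.2 i).2
    have hne (i : ι) : (a.1 i : ZMod p) ≠ 0 := fun h => by
      have := hval i
      rw [h, ZMod.val_zero] at this
      exact (a.2.2 i).1.ne this
    exact ⟨(avoidsShi_iff_avoidsShi_val hne).2 (by simpa only [hval] using a.2.1), hne⟩⟩
  left_inv v := Subtype.ext (funext fun i => ZMod.natCast_zmod_val _)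
  right_inv a := Subtype.ext (funext fun i => ZMod.val_cast_of_lt (a.2.2 i).2)

variable [Fintype ι]

lemma card_avoidsShi_ne_zero [NeZero p] :
    Nat.card {w : ι → ZMod p // AvoidsShi w ∧ ∀ i, w i ≠ 0} =
      (p - Fintype.card ι) ^ Fintype.card ι := by
  rw [Nat.card_congr ((avoidsShiValEquiv p).trans (vacancyEquiv p)), Nat.card_fun,
    Nat.card_eq_fintype_card, Fintype.card_fin, Nat.card_eq_fintype_card]

theorem card_avoidsShi [Nonempty ι] (hp : Fintype.card ι < p) :
    Nat.card {v : ι → ZMod p // AvoidsShi v} =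
      p * (p - Fintype.card ι) ^ (Fintype.card ι - 1) := by
  have : NeZero p := ⟨by omega⟩
  have hmul := card_avoidsShi_mul (ι := ι) (R := ZMod p)
  rw [card_avoidsShi_ne_zero, ZMod.card] at hmul
  refine Nat.eq_of_mul_eq_mul_right (Nat.sub_pos_of_lt hp) ?_
  rw [hmul, mul_assoc, ← pow_succ, Nat.sub_add_cancel Fintype.card_pos]

end ShiCount

section NestedAvoidance

variable {α : Type*} [DecidableEq α]

lemma injective_cons_avoiding_iff {k : ℕ} (A : Fin (k + 1) → Finset α) (a : α)
    (w : Fin k → α) :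
    (Function.Injective (Fin.cons a w : Fin (k + 1) → α) ∧
        ∀ i, (Fin.cons a w : Fin (k + 1) → α) i ∉ A i) ↔
      a ∉ A 0 ∧ Function.Injective w ∧ ∀ i, w i ∉ insert a (A i.succ) := by
  simp only [Fin.cons_injective_iff, Fin.forall_fin_succ, Fin.cons_zero, Fin.cons_succ,
    Finset.mem_insert, not_or, Set.mem_range, not_exists, forall_and]
  grind

theorem card_injective_avoiding_antitone [Fintype α] (k c : ℕ) (A : Fin k → Finset α)
    (hA : Antitone A) (hcard : ∀ i, #(A i) + i = c) :
    Nat.card {v : Fin k → α // Function.Injective v ∧ ∀ i, v i ∉ A i} =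
      (Fintype.card α - c) ^ k := by
  induction k generalizing c with
  | zero => simp [Function.injective_of_subsingleton]
  | succ k ih =>
    have hfiber (a : α) : Nat.card {w : Fin k → α // a ∉ A 0 ∧ Function.Injective w ∧
        ∀ i, w i ∉ insert a (A i.succ)} = if a ∈ A 0 then 0 else (Fintype.card α - c) ^ k := by
      split_ifs with ha
      · simp [ha]
      · simp only [ha, not_false_eq_true, true_and]
        refine ih c _ (fun i j hij => insert_subset_insert a (hA (Fin.succ_le_succ_iff.2 hij)))
          fun i => ?_
        have : a ∉ A i.succ := fun h => ha (hA (Fin.zero_le _) h)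
        rw [card_insert_of_notMem this, ← hcard i.succ, Fin.val_succ]
        ring
    have e : {v : Fin (k + 1) → α // Function.Injective v ∧ ∀ i, v i ∉ A i} ≃
        Σ a, {w : Fin k → α // a ∉ A 0 ∧ Function.Injective w ∧
          ∀ i, w i ∉ insert a (A i.succ)} :=
      ((Fin.consEquiv fun _ => α).subtypeEquiv
        fun v => (injective_cons_avoiding_iff A v.1 v.2).symm).symm.trans
      (Equiv.subtypeProdEquivSigmaSubtype _)
    have h0 : #(A 0) = c := by simpa using hcard 0
    rw [Nat.card_congr e, Nat.card_sigma]
    simp only [hfiber, sum_ite, sum_const_zero, zero_add, sum_const, smul_eq_mul, filter_not,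
      filter_mem_eq_inter, univ_inter, card_univ_sdiff, h0, pow_succ, mul_comm]

end NestedAvoidance

section Ish

variable {R : Type*} [AddGroupWithOne R] [DecidableEq R] {m : ℕ}

def ishForbidden (t : R) (i : Fin m) : Finset R :=
  (range (m - i + 1)).image fun a : ℕ => t + (a : R)

lemma mem_ishForbidden {t x : R} {i : Fin m} :
    x ∈ ishForbidden t i ↔ ∃ a : ℕ, a ≤ m - i ∧ t + a = x := by
  simp only [ishForbidden, mem_image, mem_range, Nat.lt_succ_iff]

lemma ishForbidden_antitone (t : R) : Antitone (ishForbidden (m := m) t) := fun i j hij =>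
  image_subset_image (range_subset_range.2 (by have : (i : ℕ) ≤ j := hij; omega))

lemma card_ishForbidden {p : ℕ} (hp : m < p) (t : ZMod p) (i : Fin m) :
    #(ishForbidden t i) = m - i + 1 := by
  have : NeZero p := ⟨by omega⟩
  rw [ishForbidden, card_image_of_injOn, card_range]
  intro a ha b hb hab
  simp only [coe_range, Set.mem_Iio] at ha hb
  rw [← ZMod.val_cast_of_lt (a := a) (n := p) (by omega),
    ← ZMod.val_cast_of_lt (a := b) (n := p) (by omega), add_left_cancel hab]

lemma avoidsIsh_snoc_iff (w : Fin m → R) (t : R) :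
    AvoidsIsh (Fin.snoc w t : Fin (m + 1) → R) ↔
      Function.Injective w ∧ ∀ i, w i ∉ ishForbidden t i := by
  have hdistinct : (∀ i j : Fin (m + 1), i < j → (Fin.snoc w t : Fin (m + 1) → R) i ≠
      (Fin.snoc w t : Fin (m + 1) → R) j) ↔ Function.Injective (Fin.snoc w t : Fin (m + 1) → R) :=
    (Function.injective_iff_pairwise_ne.trans pairwise_iff_lt).symm
  rw [AvoidsIsh, hdistinct, Fin.snoc_injective_iff, Fin.forall_fin_succ']
  simp only [Fin.snoc_castSucc, Fin.snoc_last, Fin.val_last, Fin.val_castSucc, mem_ishForbidden,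
    Set.mem_range, not_exists]
  refine ⟨fun ⟨⟨hw, ht⟩, hlt, _⟩ => ⟨hw, fun i a ⟨ha, he⟩ => ?_⟩, fun ⟨hw, h⟩ =>
    ⟨⟨hw, fun i hi => h i 0 ⟨Nat.zero_le _, by simp [hi]⟩⟩, fun i a _ ha he => h i a ⟨ha, he.symm⟩,
      fun a h1 h2 => by omega⟩⟩
  rcases Nat.eq_zero_or_pos a with rfl | hpos
  · exact ht i (by simpa using he.symm)
  · exact hlt i a hpos ha he.symm

end Ish

theorem card_avoidsIsh {m p : ℕ} (hp : m + 1 < p) :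
    Nat.card {v : Fin (m + 1) → ZMod p // AvoidsIsh v} = p * (p - (m + 1)) ^ m := by
  have : NeZero p := ⟨by omega⟩
  have e : {v : Fin (m + 1) → ZMod p // AvoidsIsh v} ≃
      Σ t : ZMod p, {w : Fin m → ZMod p // Function.Injective w ∧ ∀ i, w i ∉ ishForbidden t i} :=
    ((Fin.snocEquiv fun _ => ZMod p).subtypeEquiv
      fun x => (avoidsIsh_snoc_iff x.2 x.1).symm).symm.trans
      (Equiv.subtypeProdEquivSigmaSubtype fun t w => Function.Injective w ∧
        ∀ i, w i ∉ ishForbidden t i)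
  have hfiber (t : ZMod p) :
      Nat.card {w : Fin m → ZMod p // Function.Injective w ∧ ∀ i, w i ∉ ishForbidden t i} =
        (p - (m + 1)) ^ m := by
    rw [card_injective_avoiding_antitone m (m + 1) (ishForbidden t) (ishForbidden_antitone t)
      fun i => by rw [card_ishForbidden (by omega)]; omega, ZMod.card]
  rw [Nat.card_congr e, Nat.card_sigma, sum_congr rfl fun t _ => hfiber t, sum_const, card_univ,
    ZMod.card, smul_eq_mul]

/-- The Shi and Ish arrangements have the same finite-field point counts, namely
`p * (p-n)^(n-1)`: they have the same characteristic polynomial `q(q-n)^(n-1)`. -/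
theorem shi_ish_same_char_poly (n p : ℕ) (hn : 2 ≤ n) (hnp : n < p) :
    Nat.card {v : Fin n → ZMod p //
        ∀ i j : Fin n, i < j → v i - v j ≠ 0 ∧ v i - v j ≠ 1}
      = Nat.card {v : Fin n → ZMod p //
          (∀ i j : Fin n, i < j → v i ≠ v j) ∧
          (∀ i : Fin n, ∀ a : ℕ, 1 ≤ a → a ≤ n - 1 - (i : ℕ) →
            v i ≠ v ⟨n - 1, by omega⟩ + (a : ZMod p))} ∧
    Nat.card {v : Fin n → ZMod p //
        ∀ i j : Fin n, i < j → v i - v j ≠ 0 ∧ v i - v j ≠ 1}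
      = p * (p - n) ^ (n - 1) := by
  obtain ⟨m, rfl⟩ : ∃ m, n = m + 1 := ⟨n - 1, by omega⟩
  have hshi : Nat.card {v : Fin (m + 1) → ZMod p // AvoidsShi v} = p * (p - (m + 1)) ^ m := by
    simpa using card_avoidsShi (ι := Fin (m + 1)) (by simpa using hnp)
  exact ⟨hshi.trans (card_avoidsIsh hnp).symm, hshi⟩
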